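/- arXiv:2112.13424 — 2 statements merged into one kernel-verified Lean document; each statement's English description precedes it below -/
import Mathlib

section
/- Let r and m be coprime positive integers. Then the sum over j from 1 to m-1-⌊m/r⌋ of j·s_j equals (m-1)(r-1)/2, where s_j = l_j - l_{j+1} for j < m-1-⌊m/r⌋, s_{m-1-⌊m/r⌋} = l_{m-1-⌊m/r⌋} - 1, and l_j = r - ⌊rj/m⌋. -/
/-!
Put `g j = l j - 1 = r - 1 - ⌊rj/m⌋` and `N = m - 1 - ⌊m/r⌋`. Since `g (N + 1) = 0`, we have
`s j = g j - g (j + 1)` on `[1, N]`, so Abel summation turns `∑ j s_j` into `∑_{j ≤ N} g j`, and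
as `g` vanishes past `N` this is the sum of `g` over all of `[1, m - 1]`. Coprimality makes `rj/m`
a non-integer for `0 < j < m`, so `⌊rj/m⌋ + ⌊r(m-j)/m⌋ = r - 1`, i.e. `g j + g (m - j) = r - 1`,
and pairing `j` with `m - j` gives `2 ∑_{j=1}^{m-1} g j = (m - 1)(r - 1)`.
-/

open Finset

theorem Antitone.sum_Icc_mul_sub_succ_add_mul {g : ℕ → ℕ} (hg : Antitone g) (N : ℕ) :
    ∑ j ∈ Icc 1 N, j * (g j - g (j + 1)) + N * g (N + 1) = ∑ j ∈ Icc 1 N, g j := by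
  induction N with
  | zero => simp
  | succ n ih =>
    have hstep :
        (n + 1) * (g (n + 1) - g (n + 2)) + (n + 1) * g (n + 2) = (n + 1) * g (n + 1) := by
      rw [← Nat.mul_add, Nat.sub_add_cancel (hg (Nat.le_succ _))]
    rw [sum_Icc_succ_top (by omega), sum_Icc_succ_top (by omega), ← ih, add_assoc, hstep,
      add_assoc, ← Nat.add_one_mul]

namespace Nat

theorem div_add_div_of_add_eq_mul_of_not_dvd {a b r m : ℕ} (hab : a + b = r * m)
    (ha : ¬ m ∣ a) : a / m + b / m = r - 1 := by
  have hm : 0 < m := Nat.pos_of_ne_zero fun h => ha (by subst h; simp_all)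
  have hdiv := add_div_eq_of_le_mod_add_mod
    (le_mod_add_mod_of_dvd_add_of_not_dvd (hab ▸ Dvd.intro_left r rfl) ha) hm
  rw [hab, Nat.mul_div_cancel _ hm] at hdiv
  rw [hdiv, Nat.add_sub_cancel]

theorem mul_div_add_mul_sub_div_of_coprime {r m j : ℕ} (hco : r.Coprime m) (hj : 0 < j)
    (hjm : j < m) : r * j / m + r * (m - j) / m = r - 1 := by
  refine div_add_div_of_add_eq_mul_of_not_dvd ?_ fun hd => ?_
  · rw [← Nat.mul_add, Nat.add_sub_cancel' hjm.le, Nat.mul_comm]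
  · exact absurd (Nat.le_of_dvd hj (hco.symm.dvd_of_dvd_mul_left hd)) (by omega)

theorem mul_div_le_sub_one {r m j : ℕ} (hjm : j < m) : r * j / m ≤ r - 1 := by
  rcases Nat.eq_zero_or_pos r with rfl | hr
  · simp
  · exact Nat.le_sub_one_of_lt (Nat.div_lt_of_lt_mul (by nlinarith))

theorem sub_one_le_mul_div_of_sub_div_le {r m j : ℕ} (hm : 0 < m) (hj : m - m / r ≤ j) :
    r - 1 ≤ r * j / m := by
  rw [Nat.le_div_iff_mul_le hm, Nat.sub_one_mul]
  have hrj : r * (m - m / r) ≤ r * j := Nat.mul_le_mul_left r hj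
  rw [Nat.mul_sub] at hrj
  have := Nat.mul_div_le m r
  omega

theorem two_mul_sum_Icc_sub_one_sub_mul_div {r m : ℕ} (hco : r.Coprime m) :
    2 * ∑ j ∈ Icc 1 (m - 1), (r - 1 - r * j / m) = (m - 1) * (r - 1) := by
  have hreflect : ∑ j ∈ Icc 1 (m - 1), (r - 1 - r * j / m)
      = ∑ j ∈ Icc 1 (m - 1), (r - 1 - r * (m - j) / m) := by
    refine sum_nbij' (m - ·) (m - ·) ?_ ?_ ?_ ?_ ?_ <;> intro j hj <;>
      simp only [mem_Icc] at hj ⊢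
    all_goals first | omega | rw [Nat.sub_sub_self (by omega)]
  have hpair :
      ∀ j ∈ Icc 1 (m - 1), (r - 1 - r * j / m) + (r - 1 - r * (m - j) / m) = r - 1 := by
    intro j hj
    rw [mem_Icc] at hj
    have := mul_div_add_mul_sub_div_of_coprime hco (j := j) (by omega) (by omega)
    generalize r * j / m = x, r * (m - j) / m = y at this ⊢
    omega
  rw [two_mul]
  nth_rw 2 [hreflect]
  rw [← sum_add_distrib, sum_congr rfl hpair, sum_const, card_Icc, smul_eq_mul,
    Nat.add_sub_cancel]

end Nat

theorem stmt2_general (r m : ℕ) (hm : 0 < m) (hco : Nat.Coprime r m)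
    (l s : ℕ → ℕ)
    (hl : ∀ j, l j = r - r * j / m)
    (hs : ∀ j, 1 ≤ j → j < m - 1 - m / r → s j = l j - l (j + 1))
    (hs' : s (m - 1 - m / r) = l (m - 1 - m / r) - 1) :
    ∑ j ∈ Finset.Icc 1 (m - 1 - m / r), j * s j = (m - 1) * (r - 1) / 2 := by
  set N := m - 1 - m / r
  set g : ℕ → ℕ := fun j => r - 1 - r * j / m
  have hg : Antitone g := fun a b hab =>
    Nat.sub_le_sub_left (Nat.div_le_div_right (Nat.mul_le_mul_left r hab)) _
  have hgN : g (N + 1) = 0 :=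
    Nat.sub_eq_zero_of_le (Nat.sub_one_le_mul_div_of_sub_div_le hm (by omega))
  have hsg : ∀ j ∈ Icc 1 N, s j = g j - g (j + 1) := by
    intro j hj
    rw [mem_Icc] at hj
    rcases hj.2.lt_or_eq with hjN | rfl
    · have hj1m : j + 1 < m := Nat.add_lt_of_lt_sub (hjN.trans_le (Nat.sub_le _ _))
      have := Nat.mul_div_le_sub_one (r := r) hj1m
      rw [hs j hj.1 hjN, hl, hl]
      simp only [g]
      generalize r * j / m = x, r * (j + 1) / m = y at this ⊢
      omega
    · rw [hs', hl, hgN, Nat.sub_zero, Nat.sub_right_comm]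
  have htail : ∑ j ∈ Icc 1 N, g j = ∑ j ∈ Icc 1 (m - 1), g j :=
    sum_subset (Icc_subset_Icc_right (Nat.sub_le _ _)) fun j hj hjN => by
      simp only [mem_Icc, not_and, not_le] at hj hjN
      exact Nat.eq_zero_of_le_zero (hgN ▸ hg (hjN hj.1))
  have habel := hg.sum_Icc_mul_sub_succ_add_mul N
  rw [hgN, Nat.mul_zero, Nat.add_zero] at habel
  rw [sum_congr rfl fun j hj => by rw [hsg j hj], habel, htail,
    ← Nat.two_mul_sum_Icc_sub_one_sub_mul_div hco, Nat.mul_div_cancel_left _ two_pos]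

/-- For coprime positive integers `r, m`, with `l j = r - ⌊rj/m⌋`,
`s j = l j - l (j+1)` for `j < m - 1 - ⌊m/r⌋` and `s (m-1-⌊m/r⌋) = l (m-1-⌊m/r⌋) - 1`,
we have `∑_{j=1}^{m-1-⌊m/r⌋} j·s j = (m-1)(r-1)/2`. -/
theorem stmt2 (r m : ℕ) (hr : 0 < r) (hm : 0 < m) (hco : Nat.Coprime r m)
    (l s : ℕ → ℕ)
    (hl : ∀ j, l j = r - r * j / m)
    (hs : ∀ j, 1 ≤ j → j < m - 1 - m / r → s j = l j - l (j + 1))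
    (hs' : s (m - 1 - m / r) = l (m - 1 - m / r) - 1) :
    ∑ j ∈ Finset.Icc 1 (m - 1 - m / r), j * s j = (m - 1) * (r - 1) / 2 :=
  stmt2_general r m hm hco l s hl hs hs'
end

section
/- Let q ≥ 2 and r ≥ 2 be positive integers and u = (q^r - 1)/(q - 1). For every j with 1 ≤ j ≤ q^{r-1} - 1, the integer ⌊ju/q^{r-1}⌋ is not divisible by q. -/
/-!
With `m = q^(r-1)` and `u = 1 + q + ⋯ + q^(r-1)` we have `u (q - 1) + 1 = q m`, so
`j u / m = j q / (q - 1) - j / ((q - 1) m)`, where the last term lies in `(0, 1/(q-1)]` for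
`1 ≤ j ≤ m`. Hence `⌊j u / m⌋ = j + ⌊(j - 1) / (q - 1)⌋`, and writing `j - 1 = t (q - 1) + s`
with `s < q - 1` this equals `t q + (s + 1)` with `0 < s + 1 < q`.
-/

theorem succ_add_div_pred_not_dvd {q : ℕ} (hq : 2 ≤ q) (k : ℕ) :
    ¬ q ∣ k + 1 + k / (q - 1) := by
  obtain ⟨a, rfl⟩ : ∃ a, q = a + 1 := ⟨q - 1, by omega⟩
  rw [Nat.add_sub_cancel]
  have hlt : k % a < a := Nat.mod_lt _ (by omega)
  have hk : k + 1 + k / a = (a + 1) * (k / a) + (k % a + 1) := by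
    nth_rw 1 [← Nat.div_add_mod k a]
    ring
  rw [hk, Nat.dvd_add_right (dvd_mul_right _ _)]
  exact Nat.not_dvd_of_pos_of_lt (by omega) (by omega)

theorem mul_div_eq_add_pred_div {q m u j : ℕ} (hq : 2 ≤ q) (hu : u * (q - 1) + 1 = q * m)
    (hj : 0 < j) (hjm : j ≤ m) : j * u / m = j + (j - 1) / (q - 1) := by
  obtain ⟨a, rfl⟩ : ∃ a, q = a + 1 := ⟨q - 1, by omega⟩
  obtain ⟨k, rfl⟩ : ∃ k, j = k + 1 := ⟨j - 1, by omega⟩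
  simp only [Nat.add_sub_cancel] at hu ⊢
  have ha : 0 < a := by omega
  obtain ⟨t, s, hs, rfl⟩ : ∃ t s, s < a ∧ k = a * t + s :=
    ⟨k / a, k % a, Nat.mod_lt _ ha, (Nat.div_add_mod k a).symm⟩
  rw [Nat.mul_add_div ha, Nat.div_eq_of_lt hs, add_zero]
  -- multiplying by `a` turns `u` into `(a + 1) m - 1`, after which both bounds are linear in `m`
  apply Nat.div_eq_of_lt_le
  · refine Nat.le_of_mul_le_mul_right ?_ ha
    nlinarith
  · refine Nat.lt_of_mul_lt_mul_right (a := a) ?_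
    nlinarith

theorem pow_sub_one_div_sub_one_mul_add_one {q r : ℕ} (hq : 1 ≤ q) (hr : 1 ≤ r) :
    (q ^ r - 1) / (q - 1) * (q - 1) + 1 = q * q ^ (r - 1) := by
  rw [Nat.div_mul_cancel (Nat.sub_one_dvd_pow_sub_one q r),
    Nat.sub_add_cancel (Nat.one_le_pow _ _ hq), ← pow_succ', Nat.sub_add_cancel hr]

/-- For `q ≥ 2`, `r ≥ 2`, `u = (q^r - 1)/(q - 1)` and
`1 ≤ j ≤ q^{r-1} - 1`, the integer `⌊ju/q^{r-1}⌋` is not divisible by `q`. -/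
theorem stmt4 (q r u : ℕ) (hq : 2 ≤ q) (hr : 2 ≤ r)
    (hu : u = (q ^ r - 1) / (q - 1))
    (j : ℕ) (h1 : 1 ≤ j) (h2 : j ≤ q ^ (r - 1) - 1) :
    ¬ q ∣ j * u / q ^ (r - 1) := by
  have hu' : u * (q - 1) + 1 = q * q ^ (r - 1) :=
    hu ▸ pow_sub_one_div_sub_one_mul_add_one (by omega) (by omega)
  rw [mul_div_eq_add_pred_div hq hu' h1 (by omega), ← Nat.sub_add_cancel h1, Nat.add_sub_cancel]
  exact succ_add_div_pred_not_dvd hq (j - 1)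
end
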